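/- If x ∈ Γ_k^n and for some index j we have s_k(x|j) ≤ 0 (where s_k(x|j) = s_k(x) − x_j s_{k-1}(x|j)), then x_j > 0 and s_{k-1}(x|j)·x_j ≥ s_k(x) > 0; in particular s_{k-1}(x|j)/s_k(x) ≥ 1/x_j. -/

import Mathlib

open Finset

/-!
Write `y` for `x` with its `j`-th coordinate set to zero. Expanding along the `j`-th coordinate,
`s_{l+1}(x) = s_{l+1}(y) + x_j s_l(y)`. If `x_j ≤ 0`, then `s_{l+1}(x) > 0` and `s_{l+1}(y) ≤ 0`
force `s_l(y) < 0`; starting from `s_k(y) ≤ 0` this descends to `s_0(y) < 0`, absurd since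
`s_0 = 1`. So `x_j > 0`, and the same identity at `l = k - 1` gives `s_{k-1}(y) x_j ≥ s_k(x)`.
-/

/-- The `k`-th elementary symmetric polynomial of `x ∈ ℝⁿ`. -/
noncomputable def esymm (n k : ℕ) (x : Fin n → ℝ) : ℝ :=
  ∑ A ∈ Finset.powersetCard k (Finset.univ : Finset (Fin n)), ∏ i ∈ A, x i

/-- The Gårding cone `Γₖⁿ = {x : sₗ(x) > 0, l = 1,…,k}`. -/
def GammaK (n k : ℕ) (x : Fin n → ℝ) : Prop :=
  ∀ l, 1 ≤ l → l ≤ k → 0 < esymm n l x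

namespace Multiset

variable {R : Type*} [CommSemiring R]

theorem esymm_zero (s : Multiset R) : s.esymm 0 = 1 := by
  simp [esymm]

theorem esymm_cons_succ (a : R) (s : Multiset R) (m : ℕ) :
    (a ::ₘ s).esymm (m + 1) = s.esymm (m + 1) + a * s.esymm m := by
  simp [esymm, powersetCard_cons, map_map, sum_map_mul_left]

theorem esymm_zero_cons (s : Multiset R) (m : ℕ) : (0 ::ₘ s).esymm m = s.esymm m := by
  cases m with
  | zero => simp only [esymm_zero]
  | succ m => rw [esymm_cons_succ, zero_mul, add_zero]

end Multiset

theorem esymm_eq_multiset_esymm (n k : ℕ) (x : Fin n → ℝ) :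
    esymm n k x = (univ.val.map x).esymm k :=
  (Finset.esymm_map_val x univ k).symm

theorem univ_val_map_eq_cons {ι α : Type*} [Fintype ι] [DecidableEq ι] (f : ι → α) (j : ι) :
    univ.val.map f = f j ::ₘ (univ.erase j).val.map f := by
  rw [← Multiset.map_cons, erase_val, Multiset.cons_erase (mem_univ j)]

theorem esymm_update_zero (n k : ℕ) (x : Fin n → ℝ) (j : Fin n) :
    esymm n k (Function.update x j 0) = ((univ.erase j).val.map x).esymm k := by
  rw [esymm_eq_multiset_esymm, univ_val_map_eq_cons, Function.update_self,
    Multiset.esymm_zero_cons]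
  congr 1
  refine Multiset.map_congr rfl fun i hi => Function.update_of_ne ?_ _ _
  exact ne_of_mem_erase (mem_def.mpr hi)

theorem esymm_succ_eq_update_add (n m : ℕ) (x : Fin n → ℝ) (j : Fin n) :
    esymm n (m + 1) x =
      esymm n (m + 1) (Function.update x j 0) + x j * esymm n m (Function.update x j 0) := by
  rw [esymm_update_zero, esymm_update_zero, esymm_eq_multiset_esymm, univ_val_map_eq_cons,
    Multiset.esymm_cons_succ]

theorem esymm_update_neg_of_succ {n l : ℕ} {x : Fin n → ℝ} {j : Fin n} (hxj : x j ≤ 0)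
    (hx : 0 < esymm n (l + 1) x) (h : esymm n (l + 1) (Function.update x j 0) ≤ 0) :
    esymm n l (Function.update x j 0) < 0 := by
  rw [esymm_succ_eq_update_add n l x j] at hx
  exact neg_of_mul_pos_right (by linarith) hxj

theorem GammaK.coord_pos_of_esymm_update_nonpos {n k : ℕ} {x : Fin n → ℝ} (hx : GammaK n k x)
    {j : Fin n} (hj : esymm n k (Function.update x j 0) ≤ 0) : 0 < x j := by
  by_contra! hxj
  have h0 : esymm n 0 (Function.update x j 0) ≤ 0 :=
    Nat.decreasingInduction (motive := fun l _ => esymm n l (Function.update x j 0) ≤ 0)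
      (fun l hl hsucc => (esymm_update_neg_of_succ hxj (hx (l + 1) l.succ_pos hl) hsucc).le)
      hj (Nat.zero_le k)
  rw [esymm_update_zero, Multiset.esymm_zero] at h0
  exact one_pos.not_ge h0

theorem neg_partial_implies_general (n k : ℕ) (x : Fin n → ℝ) (hx : GammaK n k x)
    (j : Fin n) (hj : esymm n k (Function.update x j 0) ≤ 0) :
    0 < x j ∧
    esymm n (k - 1) (Function.update x j 0) * x j ≥ esymm n k x ∧
    0 < esymm n k x ∧
    esymm n (k - 1) (Function.update x j 0) / esymm n k x ≥ 1 / x j := by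
  have hxj := hx.coord_pos_of_esymm_update_nonpos hj
  cases k with
  | zero =>
    rw [esymm_update_zero, Multiset.esymm_zero] at hj
    exact absurd hj one_pos.not_ge
  | succ m =>
    have hsk : 0 < esymm n (m + 1) x := hx (m + 1) m.succ_pos le_rfl
    have hsplit := esymm_succ_eq_update_add n m x j
    have hbound : esymm n (m + 1) x ≤ esymm n m (Function.update x j 0) * x j := by
      linarith
    refine ⟨hxj, hbound, hsk, ?_⟩
    rw [ge_iff_le, div_le_div_iff₀ hxj hsk, one_mul]
    exact hbound

/-- If x ∈ Γₖⁿ and s_k(x|j) ≤ 0 then xⱼ > 0, s_{k-1}(x|j)·xⱼ ≥ s_k(x) > 0, and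
s_{k-1}(x|j)/s_k(x) ≥ 1/xⱼ. -/
theorem neg_partial_implies (n k : ℕ) (hk : 1 ≤ k) (x : Fin n → ℝ) (hx : GammaK n k x)
    (j : Fin n) (hj : esymm n k (Function.update x j 0) ≤ 0) :
    0 < x j ∧
    esymm n (k - 1) (Function.update x j 0) * x j ≥ esymm n k x ∧
    0 < esymm n k x ∧
    esymm n (k - 1) (Function.update x j 0) / esymm n k x ≥ 1 / x j :=
  neg_partial_implies_general n k x hx j hj
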